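/- arXiv:1001.3579 — 2 statements merged into one kernel-verified Lean document; each statement's English description precedes it below -/
import Mathlib

section
/- Let C > 0 be fixed. There exists a constant C′ > 0 such that for every q > 0, ∫_0^1 ζ^{−3} log((1+ζ)/(1−ζ)) exp(−C·q/ζ) dζ ≤ C′/q. In particular, for all x, y ∈ ℝ_+^d and s ∈ [−1,1]^d with q_+(x,y,s) > 0, the integral ∫_0^1 ζ^{−3} log((1+ζ)/(1−ζ)) exp(−C·q_+(x,y,s)/ζ) dζ is bounded by C′/q_+(x,y,s). -/
open MeasureTheory Real Set

noncomputable section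

/-- Euclidean norm on `Fin d → ℝ`. -/
def euclNorm (d : ℕ) (x : Fin d → ℝ) : ℝ := Real.sqrt (∑ i, x i ^ 2)

/-- The positive orthant `(0,∞)^d`. -/
def posOrth (d : ℕ) : Set (Fin d → ℝ) := {x | ∀ i, 0 < x i}

/-- `q₊(x,y,s) = |x|² + |y|² + 2 ∑ᵢ xᵢ yᵢ sᵢ`. -/
def qplus (d : ℕ) (x y s : Fin d → ℝ) : ℝ :=
  euclNorm d x ^ 2 + euclNorm d y ^ 2 + 2 * ∑ i, x i * y i * s i

/-- `q₋(x,y,s) = |x|² + |y|² - 2 ∑ᵢ xᵢ yᵢ sᵢ`. -/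
def qminus (d : ℕ) (x y s : Fin d → ℝ) : ℝ :=
  euclNorm d x ^ 2 + euclNorm d y ^ 2 - 2 * ∑ i, x i * y i * s i

/-- The measure `μ_α` on `ℝ₊^d` with density `x₁^{2α₁+1} ⋯ x_d^{2α_d+1}`. -/
def muAlpha (d : ℕ) (α : Fin d → ℝ) : Measure (Fin d → ℝ) :=
  (volume.restrict (posOrth d)).withDensity
    (fun x => ENNReal.ofReal (∏ i, x i ^ (2 * α i + 1)))

/-- Euclidean ball of radius `r` centered at `x`. -/
def euclBall (d : ℕ) (x : Fin d → ℝ) (r : ℝ) : Set (Fin d → ℝ) :=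
  {z | euclNorm d (z - x) < r}

/-- The one-dimensional measure `Π_b` on `[-1,1]`. -/
def PiOne (b : ℝ) : Measure ℝ :=
  if b = -(1/2) then
    (ENNReal.ofReal (Real.sqrt (2 * Real.pi)))⁻¹ • (Measure.dirac (-1) + Measure.dirac 1)
  else
    (volume.restrict (Set.Icc (-1 : ℝ) 1)).withDensity
      (fun u => ENNReal.ofReal ((1 - u ^ 2) ^ (b - 1/2) /
        (Real.sqrt Real.pi * (2 : ℝ) ^ b * Real.Gamma (b + 1/2))))

/-- The product measure `Π_β = Π_{β₁} ⊗ ⋯ ⊗ Π_{β_d}` on `[-1,1]^d`. -/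
def PiMeas (d : ℕ) (β : Fin d → ℝ) : Measure (Fin d → ℝ) :=
  Measure.pi (fun i => PiOne (β i))

/-- The Laguerre heat kernel `G_t^β(x,y)` (with `ζ = tanh t`). -/
def heatG (d : ℕ) (β : Fin d → ℝ) (t : ℝ) (x y : Fin d → ℝ) : ℝ :=
  ((1 - Real.tanh t ^ 2) / (2 * Real.tanh t)) ^ ((d : ℝ) + ∑ i, β i) *
    ∫ s, Real.exp (-(qplus d x y s) / (4 * Real.tanh t) -
      Real.tanh t * qminus d x y s / 4) ∂(PiMeas d β)

/-- The modified Laguerre heat kernel `G̃_t^{α,j}(x,y) = e^{-2t} x_j y_j G_t^{α+e_j}(x,y)`. -/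
def heatGmod (d : ℕ) (α : Fin d → ℝ) (j : Fin d) (t : ℝ) (x y : Fin d → ℝ) : ℝ :=
  Real.exp (-2 * t) * x j * y j *
    heatG d (fun i => α i + if i = j then 1 else 0) t x y

/-- The Laguerre–Poisson kernel, defined by subordination. -/
def poissonP (d : ℕ) (α : Fin d → ℝ) (t : ℝ) (x y : Fin d → ℝ) : ℝ :=
  (Real.sqrt Real.pi)⁻¹ *
    ∫ u in Set.Ioi (0 : ℝ), (Real.exp (-u) / Real.sqrt u) * heatG d α (t ^ 2 / (4 * u)) x y

/-- Partial derivative of `g` in the `j`-th coordinate at `x`. -/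
def coordDeriv (d : ℕ) (j : Fin d) (g : (Fin d → ℝ) → ℝ) (x : Fin d → ℝ) : ℝ :=
  deriv (fun u => g (Function.update x j u)) (x j)

/-- The operator `δ_j = ∂/∂x_j + x_j` acting on a function of `x`. -/
def deltaOp (d : ℕ) (j : Fin d) (g : (Fin d → ℝ) → ℝ) (x : Fin d → ℝ) : ℝ :=
  coordDeriv d j g x + x j * g x

/-- The operator `δ_j^* = -∂/∂x_j + x_j - (2α_j+1)/x_j` acting on a function of `x`. -/
def deltaStarOp (d : ℕ) (αj : ℝ) (j : Fin d) (g : (Fin d → ℝ) → ℝ) (x : Fin d → ℝ) : ℝ :=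
  -coordDeriv d j g x + x j * g x - (2 * αj + 1) / x j * g x

/-!
Write `a = C q`. On `(0, 1/2]` one has `log ((1 + ζ) / (1 - ζ)) ≤ 4 ζ`, so the integrand is at most
`4 ζ⁻² e^{-a/ζ}`, whose integral over `(0, ∞)` is exactly `1 / a` (substitute `ζ = 1 / y`). On
`[1/2, 1)` one has `ζ⁻³ ≤ 8` and `e^{-a/ζ} ≤ e^{-a} ≤ 1 / a`, and the logarithm has only an integrable
singularity at `1`. The sum of the two bounds dominates the integrand on all of `(0, 1)`.
-/

lemma log_one_add_div_one_sub_nonneg {ζ : ℝ} (h0 : 0 ≤ ζ) (h1 : ζ < 1) :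
    0 ≤ log ((1 + ζ) / (1 - ζ)) :=
  log_nonneg <| by rw [le_div_iff₀ (by linarith)]; linarith

lemma log_one_add_div_one_sub_le {ζ : ℝ} (h0 : -1 < ζ) (h1 : ζ < 1) :
    log ((1 + ζ) / (1 - ζ)) ≤ 2 * ζ / (1 - ζ) := by
  have hpos : 0 < 1 - ζ := by linarith
  calc log ((1 + ζ) / (1 - ζ)) ≤ (1 + ζ) / (1 - ζ) - 1 :=
        log_le_sub_one_of_pos (div_pos (by linarith) hpos)
    _ = 2 * ζ / (1 - ζ) := by field_simp; ring

lemma integrableOn_log_one_add_div_one_sub :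
    IntegrableOn (fun ζ : ℝ => log ((1 + ζ) / (1 - ζ))) (Ioo 0 1) := by
  have hadd : IntervalIntegrable (fun ζ : ℝ => log (1 + ζ)) volume 0 1 := by
    simpa using (intervalIntegral.intervalIntegrable_log' (a := 1) (b := 1 + 1)).comp_add_left 1
  have hsub : IntervalIntegrable (fun ζ : ℝ => log (1 - ζ)) volume 0 1 := by
    simpa using (intervalIntegral.intervalIntegrable_log' (a := 1) (b := 0)).comp_sub_left 1
  refine ((hadd.sub hsub).1.mono_set Ioo_subset_Ioc_self).congr_fun
    (fun ζ ⟨hζ0, hζ1⟩ => ?_) measurableSet_Ioo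
  rw [log_div (by linarith) (by linarith)]

-- The shape of the right-hand side is that of `integral_comp_rpow_Ioi` with exponent `-1`.
lemma rpow_neg_two_mul_exp_neg_div_eq_comp_inv (a : ℝ) :
    (fun x : ℝ => x ^ (-2 : ℝ) * exp (-(a / x))) =
      fun x => (|(-1 : ℝ)| * x ^ ((-1 : ℝ) - 1)) • exp (-a * x ^ (-1 : ℝ)) := by
  ext x
  rw [rpow_neg_one, smul_eq_mul, abs_neg, abs_one, one_mul, neg_mul, div_eq_mul_inv]
  norm_num

lemma integrableOn_Ioi_rpow_neg_two_mul_exp_neg_div {a : ℝ} (ha : 0 < a) :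
    IntegrableOn (fun x : ℝ => x ^ (-2 : ℝ) * exp (-(a / x))) (Ioi 0) := by
  rw [rpow_neg_two_mul_exp_neg_div_eq_comp_inv,
    integrableOn_Ioi_comp_rpow_iff (fun y => exp (-a * y)) (by norm_num)]
  exact exp_neg_integrableOn_Ioi 0 ha

lemma integral_Ioi_rpow_neg_two_mul_exp_neg_div {a : ℝ} (ha : 0 < a) :
    ∫ x in Ioi (0 : ℝ), x ^ (-2 : ℝ) * exp (-(a / x)) = 1 / a := by
  rw [rpow_neg_two_mul_exp_neg_div_eq_comp_inv,
    integral_comp_rpow_Ioi (fun y => exp (-a * y)) (by norm_num),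
    integral_exp_mul_Ioi (neg_lt_zero.mpr ha)]
  simp

lemma exp_neg_le_inv {a : ℝ} (ha : 0 < a) : exp (-a) ≤ a⁻¹ := by
  rw [exp_neg]
  exact inv_anti₀ ha (by linarith [add_one_le_exp a])

lemma rpow_neg_three_mul_log_mul_exp_le {a ζ : ℝ} (ha : 0 < a) (hζ : ζ ∈ Ioo 0 1) :
    ζ ^ (-3 : ℝ) * log ((1 + ζ) / (1 - ζ)) * exp (-(a / ζ)) ≤
      4 * (ζ ^ (-2 : ℝ) * exp (-(a / ζ))) + 8 / a * log ((1 + ζ) / (1 - ζ)) := by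
  obtain ⟨hζ0, hζ1⟩ := hζ
  have hlog := log_one_add_div_one_sub_nonneg hζ0.le hζ1
  have hexp := (exp_pos (-(a / ζ))).le
  rcases le_or_gt ζ (1 / 2) with hsmall | hlarge
  · have hlog_le : log ((1 + ζ) / (1 - ζ)) ≤ 4 * ζ :=
      (log_one_add_div_one_sub_le (by linarith) hζ1).trans <| by
        rw [div_le_iff₀ (by linarith)]; nlinarith
    calc ζ ^ (-3 : ℝ) * log ((1 + ζ) / (1 - ζ)) * exp (-(a / ζ))
        ≤ ζ ^ (-3 : ℝ) * (4 * ζ) * exp (-(a / ζ)) := by gcongr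
      _ = 4 * (ζ ^ (-2 : ℝ) * exp (-(a / ζ))) := by
        rw [show (-2 : ℝ) = -3 + 1 by norm_num, rpow_add_one hζ0.ne']; ring
      _ ≤ _ := le_add_of_nonneg_right (by positivity)
  · have hpow : ζ ^ (-3 : ℝ) ≤ 8 :=
      calc ζ ^ (-3 : ℝ) ≤ (1 / 2) ^ (-3 : ℝ) :=
            rpow_le_rpow_of_nonpos (by norm_num) hlarge.le (by norm_num)
        _ = 8 := by norm_num
    have hexp_le : exp (-(a / ζ)) ≤ a⁻¹ :=
      (exp_le_exp.mpr (neg_le_neg ((le_div_iff₀ hζ0).mpr (by nlinarith)))).trans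
        (exp_neg_le_inv ha)
    calc ζ ^ (-3 : ℝ) * log ((1 + ζ) / (1 - ζ)) * exp (-(a / ζ))
        ≤ 8 * log ((1 + ζ) / (1 - ζ)) * a⁻¹ := by gcongr
      _ = 8 / a * log ((1 + ζ) / (1 - ζ)) := by ring
      _ ≤ _ := le_add_of_nonneg_left (by positivity)

theorem integral_rpow_neg_three_mul_log_mul_exp_le {a : ℝ} (ha : 0 < a) :
    ∫ ζ in Ioo (0 : ℝ) 1, ζ ^ (-3 : ℝ) * log ((1 + ζ) / (1 - ζ)) * exp (-(a / ζ)) ≤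
      (4 + 8 * ∫ ζ in Ioo (0 : ℝ) 1, log ((1 + ζ) / (1 - ζ))) / a := by
  have hkernel := integrableOn_Ioi_rpow_neg_two_mul_exp_neg_div ha
  have hlog := integrableOn_log_one_add_div_one_sub
  calc ∫ ζ in Ioo (0 : ℝ) 1, ζ ^ (-3 : ℝ) * log ((1 + ζ) / (1 - ζ)) * exp (-(a / ζ))
      ≤ ∫ ζ in Ioo (0 : ℝ) 1,
          4 * (ζ ^ (-2 : ℝ) * exp (-(a / ζ))) + 8 / a * log ((1 + ζ) / (1 - ζ)) := by
        refine integral_mono_of_nonneg ?_ ?_ ?_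
        · filter_upwards [ae_restrict_mem measurableSet_Ioo] with ζ ⟨hζ0, hζ1⟩
          have := log_one_add_div_one_sub_nonneg hζ0.le hζ1
          positivity
        · exact ((hkernel.mono_set Ioo_subset_Ioi_self).const_mul 4).add (hlog.const_mul _)
        · filter_upwards [ae_restrict_mem measurableSet_Ioo] with ζ hζ
          exact rpow_neg_three_mul_log_mul_exp_le ha hζ
    _ = 4 * (∫ ζ in Ioo (0 : ℝ) 1, ζ ^ (-2 : ℝ) * exp (-(a / ζ))) +
          8 / a * ∫ ζ in Ioo (0 : ℝ) 1, log ((1 + ζ) / (1 - ζ)) := by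
        rw [integral_add ((hkernel.mono_set Ioo_subset_Ioi_self).const_mul 4) (hlog.const_mul _),
          integral_const_mul, integral_const_mul]
    _ ≤ 4 * (∫ ζ in Ioi (0 : ℝ), ζ ^ (-2 : ℝ) * exp (-(a / ζ))) +
          8 / a * ∫ ζ in Ioo (0 : ℝ) 1, log ((1 + ζ) / (1 - ζ)) := by
        gcongr 4 * ?_ + _
        refine setIntegral_mono_set hkernel ?_ Ioo_subset_Ioi_self.eventuallyLE
        filter_upwards [ae_restrict_mem measurableSet_Ioi] with ζ (hζ : 0 < ζ)
        positivity
    _ = (4 + 8 * ∫ ζ in Ioo (0 : ℝ) 1, log ((1 + ζ) / (1 - ζ))) / a := by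
        rw [integral_Ioi_rpow_neg_two_mul_exp_neg_div ha]; ring

theorem stmt3 (C : ℝ) (hC : 0 < C) :
    ∃ C' > (0 : ℝ),
      (∀ q > (0 : ℝ),
        (∫ ζ in Set.Ioo (0 : ℝ) 1,
            ζ ^ (-(3 : ℝ)) * Real.log ((1 + ζ) / (1 - ζ)) * Real.exp (-(C * q / ζ))) ≤
          C' / q) ∧
      ∀ (d : ℕ), 0 < d → ∀ x y s : Fin d → ℝ,
        (∀ i, 0 < x i) → (∀ i, 0 < y i) → (∀ i, s i ∈ Set.Icc (-1 : ℝ) 1) →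
        0 < qplus d x y s →
        (∫ ζ in Set.Ioo (0 : ℝ) 1,
            ζ ^ (-(3 : ℝ)) * Real.log ((1 + ζ) / (1 - ζ)) *
              Real.exp (-(C * qplus d x y s / ζ))) ≤
          C' / qplus d x y s := by
  set K := 4 + 8 * ∫ ζ in Ioo (0 : ℝ) 1, log ((1 + ζ) / (1 - ζ))
  have hK : 0 < K := by
    have : 0 ≤ ∫ ζ in Ioo (0 : ℝ) 1, log ((1 + ζ) / (1 - ζ)) :=
      setIntegral_nonneg measurableSet_Ioo fun ζ hζ =>
        log_one_add_div_one_sub_nonneg hζ.1.le hζ.2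
    positivity
  have hbound : ∀ q > (0 : ℝ), (∫ ζ in Ioo (0 : ℝ) 1,
      ζ ^ (-(3 : ℝ)) * log ((1 + ζ) / (1 - ζ)) * exp (-(C * q / ζ))) ≤ K / C / q := by
    intro q hq
    rw [div_div]
    exact integral_rpow_neg_three_mul_log_mul_exp_le (mul_pos hC hq)
  exact ⟨K / C, by positivity, hbound, fun d _ x y s _ _ _ hq => hbound _ hq⟩
end
end

section
/- If x, x′, y ∈ ℝ_+^d satisfy |x − y| > 2|x − x′| and θ = λx + (1−λ)x′ for some λ ∈ [0,1], then for every s ∈ [−1,1]^d, (1/4)·q_±(x,y,s) ≤ q_±(θ,y,s) ≤ 4·q_±(x,y,s), for both choices of the sign ±. The same conclusion holds after exchanging the roles of x and y, i.e. if |x − y| > 2|y − y′| and θ = λy + (1−λ)y′ then (1/4)·q_±(x,y,s) ≤ q_±(x,θ,s) ≤ 4·q_±(x,y,s). -/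
open MeasureTheory Real Set

noncomputable section

/-!
Write `uᵢ(s) = (sᵢ, √(1 - sᵢ²)) ∈ ℝ²`, a unit vector when `|sᵢ| ≤ 1`. Since `⟨uᵢ(1), uᵢ(s)⟩ = sᵢ`,
`q₋(x, y, s) = ‖X - Y‖²` for `X = (xᵢ uᵢ(1))ᵢ` and `Y = (yᵢ uᵢ(s))ᵢ` in `ℝ^{d×2}`, and `x ↦ X`,
`y ↦ Y` are linear isometries. For `xᵢ yᵢ ≥ 0` also `|x - y| ≤ ‖X - Y‖`, so `|x - y| > 2|x - x'|`
puts the image `Θ` of `θ` within `‖X - Y‖ / 2` of `X`, and the triangle inequality gives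
`‖X - Y‖ / 2 ≤ ‖Θ - Y‖ ≤ 3‖X - Y‖ / 2`. The case of `q₊` is the case of `q₋` at `-s`, and the
statement for `y` is the one for `x`, since `q₋` is symmetric in `x` and `y`.
-/

lemma sq_dist_bounds_of_two_mul_dist_le {E : Type*} [PseudoMetricSpace E] {X Θ Y : E}
    (h : 2 * dist X Θ ≤ dist X Y) :
    1 / 4 * dist X Y ^ 2 ≤ dist Θ Y ^ 2 ∧ dist Θ Y ^ 2 ≤ 4 * dist X Y ^ 2 := by
  have hle : dist Θ Y ≤ dist X Θ + dist X Y := dist_triangle_left Θ Y X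
  have hge : dist X Y ≤ dist X Θ + dist Θ Y := dist_triangle X Θ Y
  have := dist_nonneg (x := X) (y := Θ)
  constructor <;> nlinarith

lemma dist_convexComb_le {E : Type*} [SeminormedAddCommGroup E] [NormedSpace ℝ E] (X X' : E)
    {lam : ℝ} (hlam : lam ∈ Icc (0 : ℝ) 1) : dist X (lam • X + (1 - lam) • X') ≤ dist X X' := by
  have hsub : X - (lam • X + (1 - lam) • X') = (1 - lam) • (X - X') := by module
  rw [dist_eq_norm, dist_eq_norm, hsub, norm_smul, Real.norm_of_nonneg (by linarith [hlam.2])]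
  exact mul_le_of_le_one_left (norm_nonneg _) (by linarith [hlam.1])

variable {d : ℕ}

lemma euclNorm_sq (v : Fin d → ℝ) : euclNorm d v ^ 2 = ∑ i, v i ^ 2 :=
  Real.sq_sqrt (by positivity)

lemma euclNorm_sub_comm (x y : Fin d → ℝ) : euclNorm d (x - y) = euclNorm d (y - x) := by
  rw [← neg_sub y x]
  simp only [euclNorm, Pi.neg_apply, neg_sq]

lemma qminus_eq_sum (x y s : Fin d → ℝ) :
    qminus d x y s = ∑ i, (x i ^ 2 + y i ^ 2 - 2 * (x i * y i * s i)) := by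
  rw [qminus, euclNorm_sq, euclNorm_sq, Finset.sum_sub_distrib, Finset.sum_add_distrib,
    Finset.mul_sum]

lemma qminus_comm (x y s : Fin d → ℝ) : qminus d x y s = qminus d y x s := by
  simp only [qminus, add_comm (euclNorm d x ^ 2), mul_comm (x _)]

lemma qplus_eq_qminus_neg (x y s : Fin d → ℝ) : qplus d x y s = qminus d x y (-s) := by
  simp only [qplus, qminus, Pi.neg_apply, mul_neg, Finset.sum_neg_distrib, sub_neg_eq_add]

lemma neg_mem_Icc_of_forall {s : Fin d → ℝ} (hs : ∀ i, s i ∈ Icc (-1 : ℝ) 1) :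
    ∀ i, (-s) i ∈ Icc (-1 : ℝ) 1 := fun i => by
  rw [Pi.neg_apply]
  exact ⟨by linarith [(hs i).2], by linarith [(hs i).1]⟩

lemma sq_euclNorm_sub_le_qminus {x y s : Fin d → ℝ} (hxy : ∀ i, 0 ≤ x i * y i)
    (hs : ∀ i, s i ≤ 1) : euclNorm d (x - y) ^ 2 ≤ qminus d x y s := by
  rw [qminus_eq_sum, euclNorm_sq]
  refine Finset.sum_le_sum fun i _ => ?_
  rw [Pi.sub_apply]
  nlinarith [mul_le_mul_of_nonneg_left (hs i) (hxy i)]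

lemma sq_sqrt_one_sub_sq {t : ℝ} (ht : t ∈ Icc (-1 : ℝ) 1) : √(1 - t ^ 2) ^ 2 = 1 - t ^ 2 :=
  Real.sq_sqrt (by nlinarith [ht.1, ht.2])

def planeLift (d : ℕ) (s : Fin d → ℝ) : (Fin d → ℝ) →ₗ[ℝ] EuclideanSpace ℝ (Fin d × Fin 2) where
  toFun y := WithLp.toLp 2 fun p => y p.1 * if p.2 = 0 then s p.1 else √(1 - s p.1 ^ 2)
  map_add' y y' := by ext p; simp only [Pi.add_apply, PiLp.add_apply, add_mul]
  map_smul' c y := by ext p; simp only [Pi.smul_apply, PiLp.smul_apply, smul_eq_mul,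
    RingHom.id_apply, mul_assoc]

lemma planeLift_apply (s y : Fin d → ℝ) (i : Fin d) (k : Fin 2) :
    planeLift d s y (i, k) = y i * if k = 0 then s i else √(1 - s i ^ 2) :=
  rfl

lemma norm_planeLift {s : Fin d → ℝ} (hs : ∀ i, s i ∈ Icc (-1 : ℝ) 1) (y : Fin d → ℝ) :
    ‖planeLift d s y‖ = euclNorm d y := by
  rw [EuclideanSpace.norm_eq, euclNorm]
  congr 1
  rw [Fintype.sum_prod_type]
  refine Finset.sum_congr rfl fun i _ => ?_
  have hsq := sq_sqrt_one_sub_sq (hs i)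
  simp only [Fin.sum_univ_two, planeLift_apply, Real.norm_eq_abs, sq_abs, ↓reduceIte,
    one_ne_zero]
  linear_combination y i ^ 2 * hsq

lemma qminus_eq_sq_norm_planeLift_sub {s : Fin d → ℝ} (hs : ∀ i, s i ∈ Icc (-1 : ℝ) 1)
    (x y : Fin d → ℝ) : qminus d x y s = ‖planeLift d 1 x - planeLift d s y‖ ^ 2 := by
  rw [EuclideanSpace.real_norm_sq_eq, qminus_eq_sum, Fintype.sum_prod_type]
  refine Finset.sum_congr rfl fun i _ => ?_
  have hsq := sq_sqrt_one_sub_sq (hs i)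
  simp only [Fin.sum_univ_two, PiLp.sub_apply, planeLift_apply, ↓reduceIte, one_ne_zero,
    Pi.one_apply, one_pow, sub_self, Real.sqrt_zero]
  linear_combination (-y i ^ 2) * hsq

theorem qminus_bounds_of_convexComb {x x' y s : Fin d → ℝ} {lam : ℝ}
    (hxy : ∀ i, 0 ≤ x i * y i) (hs : ∀ i, s i ∈ Icc (-1 : ℝ) 1) (hlam : lam ∈ Icc (0 : ℝ) 1)
    (hfar : euclNorm d (x - y) > 2 * euclNorm d (x - x')) :
    1 / 4 * qminus d x y s ≤ qminus d (lam • x + (1 - lam) • x') y s ∧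
      qminus d (lam • x + (1 - lam) • x') y s ≤ 4 * qminus d x y s := by
  set L := planeLift d 1
  have hXY : euclNorm d (x - y) ≤ dist (L x) (planeLift d s y) := by
    rw [dist_eq_norm]
    refine (sq_le_sq₀ (Real.sqrt_nonneg _) (norm_nonneg _)).1 ?_
    rw [← qminus_eq_sq_norm_planeLift_sub hs]
    exact sq_euclNorm_sub_le_qminus hxy fun i => (hs i).2
  have hXΘ : dist (L x) (L (lam • x + (1 - lam) • x')) ≤ euclNorm d (x - x') := by
    rw [map_add, map_smul, map_smul]
    refine (dist_convexComb_le _ _ hlam).trans_eq ?_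
    rw [dist_eq_norm, ← map_sub]
    exact norm_planeLift (fun _ => ⟨by norm_num, le_rfl⟩) _
  simp only [qminus_eq_sq_norm_planeLift_sub hs, ← dist_eq_norm]
  exact sq_dist_bounds_of_two_mul_dist_le (by linarith)

theorem qplus_bounds_of_convexComb {x x' y s : Fin d → ℝ} {lam : ℝ}
    (hxy : ∀ i, 0 ≤ x i * y i) (hs : ∀ i, s i ∈ Icc (-1 : ℝ) 1) (hlam : lam ∈ Icc (0 : ℝ) 1)
    (hfar : euclNorm d (x - y) > 2 * euclNorm d (x - x')) :
    1 / 4 * qplus d x y s ≤ qplus d (lam • x + (1 - lam) • x') y s ∧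
      qplus d (lam • x + (1 - lam) • x') y s ≤ 4 * qplus d x y s := by
  simp only [qplus_eq_qminus_neg]
  exact qminus_bounds_of_convexComb hxy (neg_mem_Icc_of_forall hs) hlam hfar

theorem stmt4_general (d : ℕ) :
    (∀ x x' y s : Fin d → ℝ, ∀ lam : ℝ,
      (∀ i, 0 < x i) → (∀ i, 0 < x' i) → (∀ i, 0 < y i) →
      (∀ i, s i ∈ Set.Icc (-1 : ℝ) 1) → lam ∈ Set.Icc (0 : ℝ) 1 →
      euclNorm d (x - y) > 2 * euclNorm d (x - x') →
      (1 / 4 * qplus d x y s ≤ qplus d (lam • x + (1 - lam) • x') y s ∧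
        qplus d (lam • x + (1 - lam) • x') y s ≤ 4 * qplus d x y s) ∧
      (1 / 4 * qminus d x y s ≤ qminus d (lam • x + (1 - lam) • x') y s ∧
        qminus d (lam • x + (1 - lam) • x') y s ≤ 4 * qminus d x y s)) ∧
    (∀ x y y' s : Fin d → ℝ, ∀ lam : ℝ,
      (∀ i, 0 < x i) → (∀ i, 0 < y i) → (∀ i, 0 < y' i) →
      (∀ i, s i ∈ Set.Icc (-1 : ℝ) 1) → lam ∈ Set.Icc (0 : ℝ) 1 →
      euclNorm d (x - y) > 2 * euclNorm d (y - y') →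
      (1 / 4 * qplus d x y s ≤ qplus d x (lam • y + (1 - lam) • y') s ∧
        qplus d x (lam • y + (1 - lam) • y') s ≤ 4 * qplus d x y s) ∧
      (1 / 4 * qminus d x y s ≤ qminus d x (lam • y + (1 - lam) • y') s ∧
        qminus d x (lam • y + (1 - lam) • y') s ≤ 4 * qminus d x y s)) := by
  refine ⟨fun x x' y s lam hx _ hy hs hlam hfar => ?_,
    fun x y y' s lam hx hy _ hs hlam hfar => ?_⟩
  · have hxy : ∀ i, 0 ≤ x i * y i := fun i => (mul_pos (hx i) (hy i)).le
    exact ⟨qplus_bounds_of_convexComb hxy hs hlam hfar,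
      qminus_bounds_of_convexComb hxy hs hlam hfar⟩
  · have hyx : ∀ i, 0 ≤ y i * x i := fun i => (mul_pos (hy i) (hx i)).le
    rw [euclNorm_sub_comm] at hfar
    simp only [qplus_eq_qminus_neg, qminus_comm x]
    exact ⟨qminus_bounds_of_convexComb hyx (neg_mem_Icc_of_forall hs) hlam hfar,
      qminus_bounds_of_convexComb hyx hs hlam hfar⟩

theorem stmt4 (d : ℕ) (hd : 0 < d) :
    (∀ x x' y s : Fin d → ℝ, ∀ lam : ℝ,
      (∀ i, 0 < x i) → (∀ i, 0 < x' i) → (∀ i, 0 < y i) →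
      (∀ i, s i ∈ Set.Icc (-1 : ℝ) 1) → lam ∈ Set.Icc (0 : ℝ) 1 →
      euclNorm d (x - y) > 2 * euclNorm d (x - x') →
      (1 / 4 * qplus d x y s ≤ qplus d (lam • x + (1 - lam) • x') y s ∧
        qplus d (lam • x + (1 - lam) • x') y s ≤ 4 * qplus d x y s) ∧
      (1 / 4 * qminus d x y s ≤ qminus d (lam • x + (1 - lam) • x') y s ∧
        qminus d (lam • x + (1 - lam) • x') y s ≤ 4 * qminus d x y s)) ∧
    (∀ x y y' s : Fin d → ℝ, ∀ lam : ℝ,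
      (∀ i, 0 < x i) → (∀ i, 0 < y i) → (∀ i, 0 < y' i) →
      (∀ i, s i ∈ Set.Icc (-1 : ℝ) 1) → lam ∈ Set.Icc (0 : ℝ) 1 →
      euclNorm d (x - y) > 2 * euclNorm d (y - y') →
      (1 / 4 * qplus d x y s ≤ qplus d x (lam • y + (1 - lam) • y') s ∧
        qplus d x (lam • y + (1 - lam) • y') s ≤ 4 * qplus d x y s) ∧
      (1 / 4 * qminus d x y s ≤ qminus d x (lam • y + (1 - lam) • y') s ∧
        qminus d x (lam • y + (1 - lam) • y') s ≤ 4 * qminus d x y s)) :=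
  stmt4_general d
end
end
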